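/- (Quantum network coding on the butterfly with additional registers.) Consider sixteen qubit registers in the initial state |Ψ₀⟩ = |+⟩_{A'} ⊗ |Ψ⁺⟩_{AB} ⊗ |Ψ⁺⟩_{CD} ⊗ |+⟩_{E'} ⊗ |Ψ⁺⟩_{EF} ⊗ |Ψ⁺⟩_{GH} ⊗ |Ψ⁺⟩_{IJ} ⊗ |Ψ⁺⟩_{KL} ⊗ |Ψ⁺⟩_{MN}. Perform in order: (1) Fanout^{A'}_{A→B, C→D} and Fanout^{E'}_{E→F, G→H}; (2) Add^{D,H}_{I→J}; (3) Fanout^{J}_{K→L, M→N}; (4) CNOT^{(N,F)} and CNOT^{(L,B)}; (5) Rem_{L→J} and Rem_{N→J}; (6) RemAdd_{J→D,H}; (7) Rem_{D→A'} and Rem_{H→E'}. Then for every string of the twelve measurement outcomes arising in these operations, the resulting vector equals 2^{-6}·|Ψ⁺⟩_{A'F} ⊗ |Ψ⁺⟩_{BE'} (tensored with computational-basis states of the measured registers, which may be disregarded). In particular, regardless of the measurement outcomes, the protocol deterministically produces an EPR pair between A' and F and an EPR pair between B and E'. -/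
import Mathlib


open scoped TensorProduct

namespace QNC

noncomputable section

/-- The state space of `n` qubit registers: amplitudes on the computational basis. -/
abbrev QState (n : ℕ) : Type := (Fin n → Bool) → ℂ

/-- Computational basis state `|x⟩`. -/
def ket {n : ℕ} (x : Fin n → Bool) : QState n := fun y => if y = x then 1 else 0

/-- The CNOT gate with control register `c` and target register `t`. -/
def CNOTgate {n : ℕ} (c t : Fin n) : QState n →ₗ[ℂ] QState n where
  toFun ψ := fun x => ψ (Function.update x t (xor (x c) (x t)))
  map_add' _ _ := rfl
  map_smul' _ _ := rfl

/-- The Pauli `σ_X` gate on register `i`. -/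
def Xgate {n : ℕ} (i : Fin n) : QState n →ₗ[ℂ] QState n where
  toFun ψ := fun x => ψ (Function.update x i (!(x i)))
  map_add' _ _ := rfl
  map_smul' _ _ := rfl

/-- The Pauli `σ_Z` gate on register `i`. -/
def Zgate {n : ℕ} (i : Fin n) : QState n →ₗ[ℂ] QState n where
  toFun ψ := fun x => if x i then -ψ x else ψ x
  map_add' ψ φ := by funext x; by_cases h : x i <;> simp [h, neg_add] <;> ring
  map_smul' c ψ := by funext x; by_cases h : x i <;> simp [h]

/-- The Hadamard gate on register `i`. -/
def Hgate {n : ℕ} (i : Fin n) : QState n →ₗ[ℂ] QState n where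
  toFun ψ := fun x => (Real.sqrt 2 : ℂ)⁻¹ *
      (ψ (Function.update x i false) + (if x i then -1 else 1) * ψ (Function.update x i true))
  map_add' ψ φ := by funext x; simp only [Pi.add_apply]; ring
  map_smul' c ψ := by
    funext x; simp only [Pi.smul_apply, smul_eq_mul, RingHom.id_apply]; ring

/-- The computational-basis measurement map `|a⟩⟨a|_i ⊗ I` for outcome `a` on register `i`
(the measured register is kept, left in the basis state `|a⟩`, and can be disregarded). -/
def proj {n : ℕ} (i : Fin n) (a : Bool) : QState n →ₗ[ℂ] QState n where
  toFun ψ := fun x => if x i = a then ψ x else 0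
  map_add' ψ φ := by funext x; by_cases h : x i = a <;> simp [h]
  map_smul' c ψ := by funext x; by_cases h : x i = a <;> simp [h]

/-- `σ_X^a` on register `i`. -/
def Xpow {n : ℕ} (a : Bool) (i : Fin n) : QState n →ₗ[ℂ] QState n :=
  if a then Xgate i else LinearMap.id

/-- `σ_Z^a` on register `i`. -/
def Zpow {n : ℕ} (a : Bool) (i : Fin n) : QState n →ₗ[ℂ] QState n :=
  if a then Zgate i else LinearMap.id

/-- The Connection operation `Con^c_{r→t}` with measurement outcome `a`:
apply `CNOT^{(c,r)}`, project register `r` onto `|a⟩`, apply `σ_X^a` to register `t`. -/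
def Con {n : ℕ} (c r t : Fin n) (a : Bool) : QState n →ₗ[ℂ] QState n :=
  Xpow a t ∘ₗ proj r a ∘ₗ CNOTgate c r

/-- The Connection:Add operation `Add^{c₁,c₂}_{r→t}` with measurement outcome `a`:
apply `CNOT^{(c₁,r)}`, then `CNOT^{(c₂,r)}`, project `r` onto `|a⟩`, apply `σ_X^a` to `t`. -/
def AddOp {n : ℕ} (c₁ c₂ r t : Fin n) (a : Bool) : QState n →ₗ[ℂ] QState n :=
  Con c₂ r t a ∘ₗ CNOTgate c₁ r

/-- The Connection:Fanout operation `Fanout^c_{r₁→t₁, r₂→t₂}` with outcomes `a₁, a₂`. -/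
def Fanout {n : ℕ} (c r₁ t₁ r₂ t₂ : Fin n) (a₁ a₂ : Bool) : QState n →ₗ[ℂ] QState n :=
  Con c r₂ t₂ a₂ ∘ₗ Con c r₁ t₁ a₁

/-- The Removal operation `Rem_{r→t}` with measurement outcome `a`:
apply `H` to `r`, project `r` onto `|a⟩`, apply `σ_Z^a` to `t`. -/
def Rem {n : ℕ} (r t : Fin n) (a : Bool) : QState n →ₗ[ℂ] QState n :=
  Zpow a t ∘ₗ proj r a ∘ₗ Hgate r

/-- The Removal:Add operation `RemAdd_{r→t₁,t₂}` with measurement outcome `a`: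
apply `H` to `r`, project `r` onto `|a⟩`, apply `σ_Z^a` to both `t₁` and `t₂`. -/
def RemAdd {n : ℕ} (r t₁ t₂ : Fin n) (a : Bool) : QState n →ₗ[ℂ] QState n :=
  Zpow a t₂ ∘ₗ Zpow a t₁ ∘ₗ proj r a ∘ₗ Hgate r


variable {n : ℕ}

lemma CNOT_ket (c r : Fin n) (h : c ≠ r) (x : Fin n → Bool) :
    CNOTgate c r (ket x) = ket (Function.update x r (xor (x c) (x r))) := by
  have ff : ∀ y : Fin n → Bool,
      Function.update (Function.update y r (xor (y c) (y r))) r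
        (xor ((Function.update y r (xor (y c) (y r))) c)
             ((Function.update y r (xor (y c) (y r))) r)) = y := by
    intro y
    funext i
    rcases eq_or_ne i r with rfl | hi
    · simp [Function.update_self, Function.update_of_ne h]
    · simp [Function.update_of_ne hi]
  funext y
  show (if Function.update y r (xor (y c) (y r)) = x then (1:ℂ) else 0)
      = if y = Function.update x r (xor (x c) (x r)) then 1 else 0
  refine if_congr ⟨fun hh => ?_, fun hh => ?_⟩ rfl rfl
  · rw [← hh]; exact (ff y).symm
  · rw [hh]; exact ff x

lemma X_ket (i : Fin n) (x : Fin n → Bool) :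
    Xgate i (ket x) = ket (Function.update x i (!(x i))) := by
  have ff : ∀ y : Fin n → Bool,
      Function.update (Function.update y i (!(y i))) i (!((Function.update y i (!(y i))) i)) = y := by
    intro y; funext j
    rcases eq_or_ne j i with rfl | hj
    · simp
    · simp [Function.update_of_ne hj]
  funext y
  show (if Function.update y i (!(y i)) = x then (1:ℂ) else 0)
      = if y = Function.update x i (!(x i)) then 1 else 0
  refine if_congr ⟨fun hh => ?_, fun hh => ?_⟩ rfl rfl
  · rw [← hh]; exact (ff y).symm
  · rw [hh]; exact ff x

lemma proj_ket (i : Fin n) (a : Bool) (x : Fin n → Bool) :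
    proj i a (ket x) = if x i = a then ket x else 0 := by
  funext y
  show (if y i = a then (if y = x then (1:ℂ) else 0) else 0) = _
  by_cases hyx : y = x
  · subst hyx; by_cases h : y i = a <;> simp [h, ket]
  · by_cases h : x i = a <;> simp [h, hyx, ket]

lemma Z_ket (i : Fin n) (x : Fin n → Bool) :
    Zgate i (ket x) = (if x i then (-1:ℂ) else 1) • ket x := by
  funext y
  show (if y i then -(if y = x then (1:ℂ) else 0) else (if y = x then 1 else 0)) = _
  by_cases hyx : y = x
  · subst hyx; by_cases h : y i <;> simp [h, ket]
  · by_cases h : y i <;> simp [h, hyx, ket]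

lemma Zpow_ket (a : Bool) (i : Fin n) (x : Fin n → Bool) :
    Zpow a i (ket x) = (if a && x i then (-1:ℂ) else 1) • ket x := by
  cases a
  · simp [Zpow]
  · simp [Zpow, Z_ket]

lemma projH_ket (r : Fin n) (a : Bool) (x : Fin n → Bool) :
    proj r a (Hgate r (ket x)) =
      (Real.sqrt 2 : ℂ)⁻¹ • (if a && x r then (-1:ℂ) else 1) • ket (Function.update x r a) := by
  funext y
  show (if y r = a then (Real.sqrt 2 : ℂ)⁻¹ *
      ((if Function.update y r false = x then (1:ℂ) else 0) +
        (if y r then -1 else 1) * (if Function.update y r true = x then (1:ℂ) else 0)) else 0) = _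
  by_cases hy : y = Function.update x r a
  · subst hy
    have h1 : Function.update (Function.update x r a) r false = Function.update x r false := by
      simp [Function.update_idem]
    have h2 : Function.update (Function.update x r a) r true = Function.update x r true := by
      simp [Function.update_idem]
    have hr : Function.update x r a r = a := Function.update_self _ _ _
    rw [hr, h1, h2]
    simp only [if_pos rfl, ket, Pi.smul_apply, smul_eq_mul, if_pos rfl]
    cases a <;> cases hxr : x r <;>
      simp [Function.update_eq_self_iff, hxr]
  · have key : ∀ b : Bool, y r = a → Function.update y r b = x → False := by
      intro b hya h
      apply hy
      funext j
      rcases eq_or_ne j r with rfl | hj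
      · simp [hya]
      · rw [Function.update_of_ne hj, ← h, Function.update_of_ne hj]
    by_cases hya : y r = a
    · have e0 : (Function.update y r false = x) = False := by
        simp only [eq_iff_iff, iff_false]; exact fun h => key false hya h
      have e1 : (Function.update y r true = x) = False := by
        simp only [eq_iff_iff, iff_false]; exact fun h => key true hya h
      have hz : ket (Function.update x r a) y = (0:ℂ) := if_neg hy
      simp only [hya, e0, e1, if_true, if_false, Pi.smul_apply, smul_eq_mul]
      split <;> simp [hz]
    · have hz : ket (Function.update x r a) y = (0:ℂ) := if_neg hy
      simp only [hya, if_false, Pi.smul_apply, smul_eq_mul]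
      split <;> simp [hz]

lemma Con_ket (c r t : Fin n) (hcr : c ≠ r) (hrt : r ≠ t) (hct : c ≠ t)
    (a : Bool) (x : Fin n → Bool) :
    Con c r t a (ket x) =
      if xor (x c) (x r) = a then
        ket (Function.update (Function.update x r a) t (xor (x t) a)) else 0 := by
  have : Con c r t a (ket x) = Xpow a t (proj r a (CNOTgate c r (ket x))) := rfl
  rw [this, CNOT_ket c r hcr, proj_ket]
  rw [Function.update_self]
  by_cases hc : xor (x c) (x r) = a
  · rw [if_pos hc, if_pos hc, hc]
    cases a
    · have ht : Function.update x r false t = x t := Function.update_of_ne (Ne.symm hrt) _ _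
      simp only [Xpow, Bool.false_eq_true, if_false, LinearMap.id_coe, id_eq, Bool.xor_false]
      rw [← ht, Function.update_eq_self]
    · have ht : Function.update x r true t = x t := Function.update_of_ne (Ne.symm hrt) _ _
      simp only [Xpow, if_true, X_ket, Bool.xor_true, ht]
  · rw [if_neg hc, if_neg hc, map_zero]

lemma Rem_ket (r t : Fin n) (hrt : r ≠ t) (a : Bool) (x : Fin n → Bool) (hx : x r = x t) :
    Rem r t a (ket x) = (Real.sqrt 2 : ℂ)⁻¹ • ket (Function.update x r a) := by
  have h0 : Rem r t a (ket x) = Zpow a t (proj r a (Hgate r (ket x))) := rfl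
  rw [h0, projH_ket, map_smul, map_smul, Zpow_ket]
  have ht : Function.update x r a t = x t := Function.update_of_ne (Ne.symm hrt) _ _
  rw [ht, ← hx]
  cases a <;> cases hxr : x r <;> simp [hxr, smul_smul]

lemma RemAdd_ket (r t₁ t₂ : Fin n) (h1 : r ≠ t₁) (h2 : r ≠ t₂) (a : Bool)
    (x : Fin n → Bool) (hx : xor (x t₁) (x t₂) = x r) :
    RemAdd r t₁ t₂ a (ket x) = (Real.sqrt 2 : ℂ)⁻¹ • ket (Function.update x r a) := by
  have h0 : RemAdd r t₁ t₂ a (ket x) = Zpow a t₂ (Zpow a t₁ (proj r a (Hgate r (ket x)))) := rfl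
  simp only [h0, projH_ket, map_smul, Zpow_ket]
  have ht1 : Function.update x r a t₁ = x t₁ := Function.update_of_ne (Ne.symm h1) _ _
  have ht2 : Function.update x r a t₂ = x t₂ := Function.update_of_ne (Ne.symm h2) _ _
  rw [ht1, ht2]
  cases a <;> cases hx1 : x t₁ <;> cases hx2 : x t₂ <;>
    rw [hx1, hx2] at hx <;> simp [hx1, hx2, ← hx, smul_smul]

lemma sum_collapse {M : Type*} [AddCommMonoid M] (f : Bool → M) (c a : Bool) :
    ∑ u : Bool, (if xor c u = a then f u else 0) = f (xor c a) := by
  cases c <;> cases a <;> simp [Fintype.sum_bool]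

def tupEquiv : (Bool × Bool × Bool × Bool × Bool × Bool × Bool × Bool × Bool) ≃ (Fin 9 → Bool) where
  toFun t := ![t.1, t.2.2.2.2.2.2.2.2, t.2.2.2.2.2.2.2.1, t.2.1, t.2.2.2.2.2.2.1,
    t.2.2.2.2.2.1, t.2.2.2.2.1, t.2.2.2.1, t.2.2.1]
  invFun b := (b 0, b 3, b 8, b 7, b 6, b 5, b 4, b 2, b 1)
  left_inv t := rfl
  right_inv b := by funext i; fin_cases i <;> rfl

lemma init :
    (∑ b : Fin 9 → Bool,
      (ket (fun i : Fin 16 => b (![0, 1, 1, 2, 2, 3, 4, 4, 5, 5, 6, 6, 7, 7, 8, 8] i)) : QState 16))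
    = ∑ b0 : Bool, ∑ b3 : Bool, ∑ b8 : Bool, ∑ b7 : Bool, ∑ b6 : Bool, ∑ b5 : Bool,
        ∑ b4 : Bool, ∑ b2 : Bool, ∑ b1 : Bool,
        ket ![b0, b1, b1, b2, b2, b3, b4, b4, b5, b5, b6, b6, b7, b7, b8, b8] := by
  rw [← Fintype.sum_equiv tupEquiv
    (fun t => (ket (fun i : Fin 16 =>
      (tupEquiv t) (![0, 1, 1, 2, 2, 3, 4, 4, 5, 5, 6, 6, 7, 7, 8, 8] i)) : QState 16))
    (fun b => ket fun i => b (![0, 1, 1, 2, 2, 3, 4, 4, 5, 5, 6, 6, 7, 7, 8, 8] i))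
    (fun t => rfl)]
  simp only [Fintype.sum_prod_type]
  refine Finset.sum_congr rfl fun b0 _ => Finset.sum_congr rfl fun b3 _ =>
    Finset.sum_congr rfl fun b8 _ => Finset.sum_congr rfl fun b7 _ =>
    Finset.sum_congr rfl fun b6 _ => Finset.sum_congr rfl fun b5 _ =>
    Finset.sum_congr rfl fun b4 _ => Finset.sum_congr rfl fun b2 _ =>
    Finset.sum_congr rfl fun b1 _ => ?_
  exact congrArg ket (by funext i; fin_cases i <;> rfl)

lemma step1 (a₁ : Bool) :
    Con (0 : Fin 16) 1 2 a₁ (∑ b0 : Bool, ∑ b3 : Bool, ∑ b8 : Bool, ∑ b7 : Bool, ∑ b6 : Bool, ∑ b5 : Bool, ∑ b4 : Bool, ∑ b2 : Bool, ∑ b1 : Bool,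
      (ket ![b0, b1, b1, b2, b2, b3, b4, b4, b5, b5, b6, b6, b7, b7, b8, b8] : QState 16))
    = (∑ b0 : Bool, ∑ b3 : Bool, ∑ b8 : Bool, ∑ b7 : Bool, ∑ b6 : Bool, ∑ b5 : Bool, ∑ b4 : Bool, ∑ b2 : Bool,
      (ket ![b0, a₁, b0, b2, b2, b3, b4, b4, b5, b5, b6, b6, b7, b7, b8, b8] : QState 16)) := by
  simp only [map_sum]
  have hket : ∀ b0 b3 b8 b7 b6 b5 b4 b2 b1 : Bool,
      Con (0 : Fin 16) 1 2 a₁ (ket ![b0, b1, b1, b2, b2, b3, b4, b4, b5, b5, b6, b6, b7, b7, b8, b8])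
      = if xor b0 b1 = a₁ then (ket ![b0, a₁, (xor b1 a₁), b2, b2, b3, b4, b4, b5, b5, b6, b6, b7, b7, b8, b8] : QState 16) else 0 := by
    intro b0 b3 b8 b7 b6 b5 b4 b2 b1
    have hc : (![b0, b1, b1, b2, b2, b3, b4, b4, b5, b5, b6, b6, b7, b7, b8, b8] : Fin 16 → Bool) 0 = b0 := rfl
    have hr : (![b0, b1, b1, b2, b2, b3, b4, b4, b5, b5, b6, b6, b7, b7, b8, b8] : Fin 16 → Bool) 1 = b1 := rfl
    have hv : Function.update (Function.update (![b0, b1, b1, b2, b2, b3, b4, b4, b5, b5, b6, b6, b7, b7, b8, b8] : Fin 16 → Bool) 1 a₁) 2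
        (xor ((![b0, b1, b1, b2, b2, b3, b4, b4, b5, b5, b6, b6, b7, b7, b8, b8] : Fin 16 → Bool) 2) a₁) = ![b0, a₁, (xor b1 a₁), b2, b2, b3, b4, b4, b5, b5, b6, b6, b7, b7, b8, b8] := by
      funext i; fin_cases i <;> rfl
    rw [Con_ket _ _ _ (by decide) (by decide) (by decide), hv, hc, hr]
  simp only [hket, sum_collapse]
  refine Finset.sum_congr rfl fun b0 _ => Finset.sum_congr rfl fun b3 _ => Finset.sum_congr rfl fun b8 _ => Finset.sum_congr rfl fun b7 _ => Finset.sum_congr rfl fun b6 _ => Finset.sum_congr rfl fun b5 _ => Finset.sum_congr rfl fun b4 _ => Finset.sum_congr rfl fun b2 _ => ?_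
  exact congrArg ket (by funext i; fin_cases i <;> simp [Bool.xor_assoc, Bool.xor_comm, Bool.xor_left_comm])

lemma step2 (a₁ a₂ : Bool) :
    Con (0 : Fin 16) 3 4 a₂ (∑ b0 : Bool, ∑ b3 : Bool, ∑ b8 : Bool, ∑ b7 : Bool, ∑ b6 : Bool, ∑ b5 : Bool, ∑ b4 : Bool, ∑ b2 : Bool,
      (ket ![b0, a₁, b0, b2, b2, b3, b4, b4, b5, b5, b6, b6, b7, b7, b8, b8] : QState 16))
    = (∑ b0 : Bool, ∑ b3 : Bool, ∑ b8 : Bool, ∑ b7 : Bool, ∑ b6 : Bool, ∑ b5 : Bool, ∑ b4 : Bool,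
      (ket ![b0, a₁, b0, a₂, b0, b3, b4, b4, b5, b5, b6, b6, b7, b7, b8, b8] : QState 16)) := by
  simp only [map_sum]
  have hket : ∀ b0 b3 b8 b7 b6 b5 b4 b2 : Bool,
      Con (0 : Fin 16) 3 4 a₂ (ket ![b0, a₁, b0, b2, b2, b3, b4, b4, b5, b5, b6, b6, b7, b7, b8, b8])
      = if xor b0 b2 = a₂ then (ket ![b0, a₁, b0, a₂, (xor b2 a₂), b3, b4, b4, b5, b5, b6, b6, b7, b7, b8, b8] : QState 16) else 0 := by
    intro b0 b3 b8 b7 b6 b5 b4 b2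
    have hc : (![b0, a₁, b0, b2, b2, b3, b4, b4, b5, b5, b6, b6, b7, b7, b8, b8] : Fin 16 → Bool) 0 = b0 := rfl
    have hr : (![b0, a₁, b0, b2, b2, b3, b4, b4, b5, b5, b6, b6, b7, b7, b8, b8] : Fin 16 → Bool) 3 = b2 := rfl
    have hv : Function.update (Function.update (![b0, a₁, b0, b2, b2, b3, b4, b4, b5, b5, b6, b6, b7, b7, b8, b8] : Fin 16 → Bool) 3 a₂) 4
        (xor ((![b0, a₁, b0, b2, b2, b3, b4, b4, b5, b5, b6, b6, b7, b7, b8, b8] : Fin 16 → Bool) 4) a₂) = ![b0, a₁, b0, a₂, (xor b2 a₂), b3, b4, b4, b5, b5, b6, b6, b7, b7, b8, b8] := by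
      funext i; fin_cases i <;> rfl
    rw [Con_ket _ _ _ (by decide) (by decide) (by decide), hv, hc, hr]
  simp only [hket, sum_collapse]
  refine Finset.sum_congr rfl fun b0 _ => Finset.sum_congr rfl fun b3 _ => Finset.sum_congr rfl fun b8 _ => Finset.sum_congr rfl fun b7 _ => Finset.sum_congr rfl fun b6 _ => Finset.sum_congr rfl fun b5 _ => Finset.sum_congr rfl fun b4 _ => ?_
  exact congrArg ket (by funext i; fin_cases i <;> simp [Bool.xor_assoc, Bool.xor_comm, Bool.xor_left_comm])

lemma step3 (a₁ a₂ a₃ : Bool) :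
    Con (5 : Fin 16) 6 7 a₃ (∑ b0 : Bool, ∑ b3 : Bool, ∑ b8 : Bool, ∑ b7 : Bool, ∑ b6 : Bool, ∑ b5 : Bool, ∑ b4 : Bool,
      (ket ![b0, a₁, b0, a₂, b0, b3, b4, b4, b5, b5, b6, b6, b7, b7, b8, b8] : QState 16))
    = (∑ b0 : Bool, ∑ b3 : Bool, ∑ b8 : Bool, ∑ b7 : Bool, ∑ b6 : Bool, ∑ b5 : Bool,
      (ket ![b0, a₁, b0, a₂, b0, b3, a₃, b3, b5, b5, b6, b6, b7, b7, b8, b8] : QState 16)) := by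
  simp only [map_sum]
  have hket : ∀ b0 b3 b8 b7 b6 b5 b4 : Bool,
      Con (5 : Fin 16) 6 7 a₃ (ket ![b0, a₁, b0, a₂, b0, b3, b4, b4, b5, b5, b6, b6, b7, b7, b8, b8])
      = if xor b3 b4 = a₃ then (ket ![b0, a₁, b0, a₂, b0, b3, a₃, (xor b4 a₃), b5, b5, b6, b6, b7, b7, b8, b8] : QState 16) else 0 := by
    intro b0 b3 b8 b7 b6 b5 b4
    have hc : (![b0, a₁, b0, a₂, b0, b3, b4, b4, b5, b5, b6, b6, b7, b7, b8, b8] : Fin 16 → Bool) 5 = b3 := rfl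
    have hr : (![b0, a₁, b0, a₂, b0, b3, b4, b4, b5, b5, b6, b6, b7, b7, b8, b8] : Fin 16 → Bool) 6 = b4 := rfl
    have hv : Function.update (Function.update (![b0, a₁, b0, a₂, b0, b3, b4, b4, b5, b5, b6, b6, b7, b7, b8, b8] : Fin 16 → Bool) 6 a₃) 7
        (xor ((![b0, a₁, b0, a₂, b0, b3, b4, b4, b5, b5, b6, b6, b7, b7, b8, b8] : Fin 16 → Bool) 7) a₃) = ![b0, a₁, b0, a₂, b0, b3, a₃, (xor b4 a₃), b5, b5, b6, b6, b7, b7, b8, b8] := by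
      funext i; fin_cases i <;> rfl
    rw [Con_ket _ _ _ (by decide) (by decide) (by decide), hv, hc, hr]
  simp only [hket, sum_collapse]
  refine Finset.sum_congr rfl fun b0 _ => Finset.sum_congr rfl fun b3 _ => Finset.sum_congr rfl fun b8 _ => Finset.sum_congr rfl fun b7 _ => Finset.sum_congr rfl fun b6 _ => Finset.sum_congr rfl fun b5 _ => ?_
  exact congrArg ket (by funext i; fin_cases i <;> simp [Bool.xor_assoc, Bool.xor_comm, Bool.xor_left_comm])

lemma step4 (a₁ a₂ a₃ a₄ : Bool) :
    Con (5 : Fin 16) 8 9 a₄ (∑ b0 : Bool, ∑ b3 : Bool, ∑ b8 : Bool, ∑ b7 : Bool, ∑ b6 : Bool, ∑ b5 : Bool,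
      (ket ![b0, a₁, b0, a₂, b0, b3, a₃, b3, b5, b5, b6, b6, b7, b7, b8, b8] : QState 16))
    = (∑ b0 : Bool, ∑ b3 : Bool, ∑ b8 : Bool, ∑ b7 : Bool, ∑ b6 : Bool,
      (ket ![b0, a₁, b0, a₂, b0, b3, a₃, b3, a₄, b3, b6, b6, b7, b7, b8, b8] : QState 16)) := by
  simp only [map_sum]
  have hket : ∀ b0 b3 b8 b7 b6 b5 : Bool,
      Con (5 : Fin 16) 8 9 a₄ (ket ![b0, a₁, b0, a₂, b0, b3, a₃, b3, b5, b5, b6, b6, b7, b7, b8, b8])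
      = if xor b3 b5 = a₄ then (ket ![b0, a₁, b0, a₂, b0, b3, a₃, b3, a₄, (xor b5 a₄), b6, b6, b7, b7, b8, b8] : QState 16) else 0 := by
    intro b0 b3 b8 b7 b6 b5
    have hc : (![b0, a₁, b0, a₂, b0, b3, a₃, b3, b5, b5, b6, b6, b7, b7, b8, b8] : Fin 16 → Bool) 5 = b3 := rfl
    have hr : (![b0, a₁, b0, a₂, b0, b3, a₃, b3, b5, b5, b6, b6, b7, b7, b8, b8] : Fin 16 → Bool) 8 = b5 := rfl
    have hv : Function.update (Function.update (![b0, a₁, b0, a₂, b0, b3, a₃, b3, b5, b5, b6, b6, b7, b7, b8, b8] : Fin 16 → Bool) 8 a₄) 9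
        (xor ((![b0, a₁, b0, a₂, b0, b3, a₃, b3, b5, b5, b6, b6, b7, b7, b8, b8] : Fin 16 → Bool) 9) a₄) = ![b0, a₁, b0, a₂, b0, b3, a₃, b3, a₄, (xor b5 a₄), b6, b6, b7, b7, b8, b8] := by
      funext i; fin_cases i <;> rfl
    rw [Con_ket _ _ _ (by decide) (by decide) (by decide), hv, hc, hr]
  simp only [hket, sum_collapse]
  refine Finset.sum_congr rfl fun b0 _ => Finset.sum_congr rfl fun b3 _ => Finset.sum_congr rfl fun b8 _ => Finset.sum_congr rfl fun b7 _ => Finset.sum_congr rfl fun b6 _ => ?_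
  exact congrArg ket (by funext i; fin_cases i <;> simp [Bool.xor_assoc, Bool.xor_comm, Bool.xor_left_comm])

lemma step5a (a₁ a₂ a₃ a₄ : Bool) :
    CNOTgate (4 : Fin 16) 10 (∑ b0 : Bool, ∑ b3 : Bool, ∑ b8 : Bool, ∑ b7 : Bool, ∑ b6 : Bool,
      (ket ![b0, a₁, b0, a₂, b0, b3, a₃, b3, a₄, b3, b6, b6, b7, b7, b8, b8] : QState 16))
    = (∑ b0 : Bool, ∑ b3 : Bool, ∑ b8 : Bool, ∑ b7 : Bool, ∑ b6 : Bool,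
      (ket ![b0, a₁, b0, a₂, b0, b3, a₃, b3, a₄, b3, (xor b0 b6), b6, b7, b7, b8, b8] : QState 16)) := by
  simp only [map_sum]
  have hket : ∀ b0 b3 b8 b7 b6 : Bool,
      CNOTgate (4 : Fin 16) 10 (ket ![b0, a₁, b0, a₂, b0, b3, a₃, b3, a₄, b3, b6, b6, b7, b7, b8, b8]) = (ket ![b0, a₁, b0, a₂, b0, b3, a₃, b3, a₄, b3, (xor b0 b6), b6, b7, b7, b8, b8] : QState 16) := by
    intro b0 b3 b8 b7 b6
    rw [CNOT_ket _ _ (by decide)]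
    have hv : Function.update (![b0, a₁, b0, a₂, b0, b3, a₃, b3, a₄, b3, b6, b6, b7, b7, b8, b8] : Fin 16 → Bool) 10
        (xor ((![b0, a₁, b0, a₂, b0, b3, a₃, b3, a₄, b3, b6, b6, b7, b7, b8, b8] : Fin 16 → Bool) 4) ((![b0, a₁, b0, a₂, b0, b3, a₃, b3, a₄, b3, b6, b6, b7, b7, b8, b8] : Fin 16 → Bool) 10)) = ![b0, a₁, b0, a₂, b0, b3, a₃, b3, a₄, b3, (xor b0 b6), b6, b7, b7, b8, b8] := by
      funext i; fin_cases i <;> rfl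
    rw [hv]
  simp only [hket]

lemma step5b (a₁ a₂ a₃ a₄ a₅ : Bool) :
    Con (9 : Fin 16) 10 11 a₅ (∑ b0 : Bool, ∑ b3 : Bool, ∑ b8 : Bool, ∑ b7 : Bool, ∑ b6 : Bool,
      (ket ![b0, a₁, b0, a₂, b0, b3, a₃, b3, a₄, b3, (xor b0 b6), b6, b7, b7, b8, b8] : QState 16))
    = (∑ b0 : Bool, ∑ b3 : Bool, ∑ b8 : Bool, ∑ b7 : Bool,
      (ket ![b0, a₁, b0, a₂, b0, b3, a₃, b3, a₄, b3, a₅, (xor b3 b0), b7, b7, b8, b8] : QState 16)) := by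
  simp only [map_sum]
  have hket : ∀ b0 b3 b8 b7 b6 : Bool,
      Con (9 : Fin 16) 10 11 a₅ (ket ![b0, a₁, b0, a₂, b0, b3, a₃, b3, a₄, b3, (xor b0 b6), b6, b7, b7, b8, b8])
      = if xor (xor b3 b0) b6 = a₅ then (ket ![b0, a₁, b0, a₂, b0, b3, a₃, b3, a₄, b3, a₅, (xor b6 a₅), b7, b7, b8, b8] : QState 16) else 0 := by
    intro b0 b3 b8 b7 b6
    have hc : (![b0, a₁, b0, a₂, b0, b3, a₃, b3, a₄, b3, (xor b0 b6), b6, b7, b7, b8, b8] : Fin 16 → Bool) 9 = b3 := rfl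
    have hr : (![b0, a₁, b0, a₂, b0, b3, a₃, b3, a₄, b3, (xor b0 b6), b6, b7, b7, b8, b8] : Fin 16 → Bool) 10 = (xor b0 b6) := rfl
    have hv : Function.update (Function.update (![b0, a₁, b0, a₂, b0, b3, a₃, b3, a₄, b3, (xor b0 b6), b6, b7, b7, b8, b8] : Fin 16 → Bool) 10 a₅) 11
        (xor ((![b0, a₁, b0, a₂, b0, b3, a₃, b3, a₄, b3, (xor b0 b6), b6, b7, b7, b8, b8] : Fin 16 → Bool) 11) a₅) = ![b0, a₁, b0, a₂, b0, b3, a₃, b3, a₄, b3, a₅, (xor b6 a₅), b7, b7, b8, b8] := by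
      funext i; fin_cases i <;> rfl
    rw [Con_ket _ _ _ (by decide) (by decide) (by decide), hv, hc, hr]
    rw [← Bool.xor_assoc]
  simp only [hket, sum_collapse]
  refine Finset.sum_congr rfl fun b0 _ => Finset.sum_congr rfl fun b3 _ => Finset.sum_congr rfl fun b8 _ => Finset.sum_congr rfl fun b7 _ => ?_
  exact congrArg ket (by funext i; fin_cases i <;> simp [Bool.xor_assoc, Bool.xor_comm, Bool.xor_left_comm])

lemma step6 (a₁ a₂ a₃ a₄ a₅ a₆ : Bool) :
    Con (11 : Fin 16) 12 13 a₆ (∑ b0 : Bool, ∑ b3 : Bool, ∑ b8 : Bool, ∑ b7 : Bool,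
      (ket ![b0, a₁, b0, a₂, b0, b3, a₃, b3, a₄, b3, a₅, (xor b3 b0), b7, b7, b8, b8] : QState 16))
    = (∑ b0 : Bool, ∑ b3 : Bool, ∑ b8 : Bool,
      (ket ![b0, a₁, b0, a₂, b0, b3, a₃, b3, a₄, b3, a₅, (xor b3 b0), a₆, (xor b3 b0), b8, b8] : QState 16)) := by
  simp only [map_sum]
  have hket : ∀ b0 b3 b8 b7 : Bool,
      Con (11 : Fin 16) 12 13 a₆ (ket ![b0, a₁, b0, a₂, b0, b3, a₃, b3, a₄, b3, a₅, (xor b3 b0), b7, b7, b8, b8])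
      = if xor (xor b3 b0) b7 = a₆ then (ket ![b0, a₁, b0, a₂, b0, b3, a₃, b3, a₄, b3, a₅, (xor b3 b0), a₆, (xor b7 a₆), b8, b8] : QState 16) else 0 := by
    intro b0 b3 b8 b7
    have hc : (![b0, a₁, b0, a₂, b0, b3, a₃, b3, a₄, b3, a₅, (xor b3 b0), b7, b7, b8, b8] : Fin 16 → Bool) 11 = (xor b3 b0) := rfl
    have hr : (![b0, a₁, b0, a₂, b0, b3, a₃, b3, a₄, b3, a₅, (xor b3 b0), b7, b7, b8, b8] : Fin 16 → Bool) 12 = b7 := rfl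
    have hv : Function.update (Function.update (![b0, a₁, b0, a₂, b0, b3, a₃, b3, a₄, b3, a₅, (xor b3 b0), b7, b7, b8, b8] : Fin 16 → Bool) 12 a₆) 13
        (xor ((![b0, a₁, b0, a₂, b0, b3, a₃, b3, a₄, b3, a₅, (xor b3 b0), b7, b7, b8, b8] : Fin 16 → Bool) 13) a₆) = ![b0, a₁, b0, a₂, b0, b3, a₃, b3, a₄, b3, a₅, (xor b3 b0), a₆, (xor b7 a₆), b8, b8] := by
      funext i; fin_cases i <;> rfl
    rw [Con_ket _ _ _ (by decide) (by decide) (by decide), hv, hc, hr]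
  simp only [hket, sum_collapse]
  refine Finset.sum_congr rfl fun b0 _ => Finset.sum_congr rfl fun b3 _ => Finset.sum_congr rfl fun b8 _ => ?_
  exact congrArg ket (by funext i; fin_cases i <;> simp [Bool.xor_assoc, Bool.xor_comm, Bool.xor_left_comm])

lemma step7 (a₁ a₂ a₃ a₄ a₅ a₆ a₇ : Bool) :
    Con (11 : Fin 16) 14 15 a₇ (∑ b0 : Bool, ∑ b3 : Bool, ∑ b8 : Bool,
      (ket ![b0, a₁, b0, a₂, b0, b3, a₃, b3, a₄, b3, a₅, (xor b3 b0), a₆, (xor b3 b0), b8, b8] : QState 16))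
    = (∑ b0 : Bool, ∑ b3 : Bool,
      (ket ![b0, a₁, b0, a₂, b0, b3, a₃, b3, a₄, b3, a₅, (xor b3 b0), a₆, (xor b3 b0), a₇, (xor b3 b0)] : QState 16)) := by
  simp only [map_sum]
  have hket : ∀ b0 b3 b8 : Bool,
      Con (11 : Fin 16) 14 15 a₇ (ket ![b0, a₁, b0, a₂, b0, b3, a₃, b3, a₄, b3, a₅, (xor b3 b0), a₆, (xor b3 b0), b8, b8])
      = if xor (xor b3 b0) b8 = a₇ then (ket ![b0, a₁, b0, a₂, b0, b3, a₃, b3, a₄, b3, a₅, (xor b3 b0), a₆, (xor b3 b0), a₇, (xor b8 a₇)] : QState 16) else 0 := by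
    intro b0 b3 b8
    have hc : (![b0, a₁, b0, a₂, b0, b3, a₃, b3, a₄, b3, a₅, (xor b3 b0), a₆, (xor b3 b0), b8, b8] : Fin 16 → Bool) 11 = (xor b3 b0) := rfl
    have hr : (![b0, a₁, b0, a₂, b0, b3, a₃, b3, a₄, b3, a₅, (xor b3 b0), a₆, (xor b3 b0), b8, b8] : Fin 16 → Bool) 14 = b8 := rfl
    have hv : Function.update (Function.update (![b0, a₁, b0, a₂, b0, b3, a₃, b3, a₄, b3, a₅, (xor b3 b0), a₆, (xor b3 b0), b8, b8] : Fin 16 → Bool) 14 a₇) 15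
        (xor ((![b0, a₁, b0, a₂, b0, b3, a₃, b3, a₄, b3, a₅, (xor b3 b0), a₆, (xor b3 b0), b8, b8] : Fin 16 → Bool) 15) a₇) = ![b0, a₁, b0, a₂, b0, b3, a₃, b3, a₄, b3, a₅, (xor b3 b0), a₆, (xor b3 b0), a₇, (xor b8 a₇)] := by
      funext i; fin_cases i <;> rfl
    rw [Con_ket _ _ _ (by decide) (by decide) (by decide), hv, hc, hr]
  simp only [hket, sum_collapse]
  refine Finset.sum_congr rfl fun b0 _ => Finset.sum_congr rfl fun b3 _ => ?_
  exact congrArg ket (by funext i; fin_cases i <;> simp [Bool.xor_assoc, Bool.xor_comm, Bool.xor_left_comm])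

lemma step8 (a₁ a₂ a₃ a₄ a₅ a₆ a₇ : Bool) :
    CNOTgate (15 : Fin 16) 7 (∑ b0 : Bool, ∑ b3 : Bool,
      (ket ![b0, a₁, b0, a₂, b0, b3, a₃, b3, a₄, b3, a₅, (xor b3 b0), a₆, (xor b3 b0), a₇, (xor b3 b0)] : QState 16))
    = (∑ b0 : Bool, ∑ b3 : Bool,
      (ket ![b0, a₁, b0, a₂, b0, b3, a₃, b0, a₄, b3, a₅, (xor b3 b0), a₆, (xor b3 b0), a₇, (xor b3 b0)] : QState 16)) := by
  simp only [map_sum]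
  have hket : ∀ b0 b3 : Bool,
      CNOTgate (15 : Fin 16) 7 (ket ![b0, a₁, b0, a₂, b0, b3, a₃, b3, a₄, b3, a₅, (xor b3 b0), a₆, (xor b3 b0), a₇, (xor b3 b0)]) = (ket ![b0, a₁, b0, a₂, b0, b3, a₃, (xor (xor b3 b0) b3), a₄, b3, a₅, (xor b3 b0), a₆, (xor b3 b0), a₇, (xor b3 b0)] : QState 16) := by
    intro b0 b3
    rw [CNOT_ket _ _ (by decide)]
    have hv : Function.update (![b0, a₁, b0, a₂, b0, b3, a₃, b3, a₄, b3, a₅, (xor b3 b0), a₆, (xor b3 b0), a₇, (xor b3 b0)] : Fin 16 → Bool) 7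
        (xor ((![b0, a₁, b0, a₂, b0, b3, a₃, b3, a₄, b3, a₅, (xor b3 b0), a₆, (xor b3 b0), a₇, (xor b3 b0)] : Fin 16 → Bool) 15) ((![b0, a₁, b0, a₂, b0, b3, a₃, b3, a₄, b3, a₅, (xor b3 b0), a₆, (xor b3 b0), a₇, (xor b3 b0)] : Fin 16 → Bool) 7)) = ![b0, a₁, b0, a₂, b0, b3, a₃, (xor (xor b3 b0) b3), a₄, b3, a₅, (xor b3 b0), a₆, (xor b3 b0), a₇, (xor b3 b0)] := by
      funext i; fin_cases i <;> rfl
    rw [hv]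
  simp only [hket]
  refine Finset.sum_congr rfl fun b0 _ => Finset.sum_congr rfl fun b3 _ => ?_
  exact congrArg ket (by funext i; fin_cases i <;> simp [Bool.xor_assoc, Bool.xor_comm, Bool.xor_left_comm])

lemma step9 (a₁ a₂ a₃ a₄ a₅ a₆ a₇ : Bool) :
    CNOTgate (13 : Fin 16) 2 (∑ b0 : Bool, ∑ b3 : Bool,
      (ket ![b0, a₁, b0, a₂, b0, b3, a₃, b0, a₄, b3, a₅, (xor b3 b0), a₆, (xor b3 b0), a₇, (xor b3 b0)] : QState 16))
    = (∑ b0 : Bool, ∑ b3 : Bool,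
      (ket ![b0, a₁, b3, a₂, b0, b3, a₃, b0, a₄, b3, a₅, (xor b3 b0), a₆, (xor b3 b0), a₇, (xor b3 b0)] : QState 16)) := by
  simp only [map_sum]
  have hket : ∀ b0 b3 : Bool,
      CNOTgate (13 : Fin 16) 2 (ket ![b0, a₁, b0, a₂, b0, b3, a₃, b0, a₄, b3, a₅, (xor b3 b0), a₆, (xor b3 b0), a₇, (xor b3 b0)]) = (ket ![b0, a₁, (xor (xor b3 b0) b0), a₂, b0, b3, a₃, b0, a₄, b3, a₅, (xor b3 b0), a₆, (xor b3 b0), a₇, (xor b3 b0)] : QState 16) := by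
    intro b0 b3
    rw [CNOT_ket _ _ (by decide)]
    have hv : Function.update (![b0, a₁, b0, a₂, b0, b3, a₃, b0, a₄, b3, a₅, (xor b3 b0), a₆, (xor b3 b0), a₇, (xor b3 b0)] : Fin 16 → Bool) 2
        (xor ((![b0, a₁, b0, a₂, b0, b3, a₃, b0, a₄, b3, a₅, (xor b3 b0), a₆, (xor b3 b0), a₇, (xor b3 b0)] : Fin 16 → Bool) 13) ((![b0, a₁, b0, a₂, b0, b3, a₃, b0, a₄, b3, a₅, (xor b3 b0), a₆, (xor b3 b0), a₇, (xor b3 b0)] : Fin 16 → Bool) 2)) = ![b0, a₁, (xor (xor b3 b0) b0), a₂, b0, b3, a₃, b0, a₄, b3, a₅, (xor b3 b0), a₆, (xor b3 b0), a₇, (xor b3 b0)] := by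
      funext i; fin_cases i <;> rfl
    rw [hv]
  simp only [hket]
  refine Finset.sum_congr rfl fun b0 _ => Finset.sum_congr rfl fun b3 _ => ?_
  exact congrArg ket (by funext i; fin_cases i <;> simp [Bool.xor_assoc, Bool.xor_comm, Bool.xor_left_comm])

lemma step10 (a₁ a₂ a₃ a₄ a₅ a₆ a₇ a₈ : Bool) :
    Rem (13 : Fin 16) 11 a₈ (∑ b0 : Bool, ∑ b3 : Bool,
      (ket ![b0, a₁, b3, a₂, b0, b3, a₃, b0, a₄, b3, a₅, (xor b3 b0), a₆, (xor b3 b0), a₇, (xor b3 b0)] : QState 16))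
    = (Real.sqrt 2 : ℂ)⁻¹ • (∑ b0 : Bool, ∑ b3 : Bool,
      (ket ![b0, a₁, b3, a₂, b0, b3, a₃, b0, a₄, b3, a₅, (xor b3 b0), a₆, a₈, a₇, (xor b3 b0)] : QState 16)) := by
  simp only [map_sum]
  have hket : ∀ b0 b3 : Bool,
      Rem (13 : Fin 16) 11 a₈ (ket ![b0, a₁, b3, a₂, b0, b3, a₃, b0, a₄, b3, a₅, (xor b3 b0), a₆, (xor b3 b0), a₇, (xor b3 b0)])
      = (Real.sqrt 2 : ℂ)⁻¹ • (ket ![b0, a₁, b3, a₂, b0, b3, a₃, b0, a₄, b3, a₅, (xor b3 b0), a₆, a₈, a₇, (xor b3 b0)] : QState 16) := by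
    intro b0 b3
    rw [Rem_ket 13 11 (by decide) a₈ (![b0, a₁, b3, a₂, b0, b3, a₃, b0, a₄, b3, a₅, (xor b3 b0), a₆, (xor b3 b0), a₇, (xor b3 b0)]) (rfl)]
    have hv : Function.update (![b0, a₁, b3, a₂, b0, b3, a₃, b0, a₄, b3, a₅, (xor b3 b0), a₆, (xor b3 b0), a₇, (xor b3 b0)] : Fin 16 → Bool) 13 a₈ = ![b0, a₁, b3, a₂, b0, b3, a₃, b0, a₄, b3, a₅, (xor b3 b0), a₆, a₈, a₇, (xor b3 b0)] := by
      funext i; fin_cases i <;> rfl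
    rw [hv]
  simp only [hket, ← Finset.smul_sum]

lemma step11 (a₁ a₂ a₃ a₄ a₅ a₆ a₇ a₈ a₉ : Bool) :
    Rem (15 : Fin 16) 11 a₉ (∑ b0 : Bool, ∑ b3 : Bool,
      (ket ![b0, a₁, b3, a₂, b0, b3, a₃, b0, a₄, b3, a₅, (xor b3 b0), a₆, a₈, a₇, (xor b3 b0)] : QState 16))
    = (Real.sqrt 2 : ℂ)⁻¹ • (∑ b0 : Bool, ∑ b3 : Bool,
      (ket ![b0, a₁, b3, a₂, b0, b3, a₃, b0, a₄, b3, a₅, (xor b3 b0), a₆, a₈, a₇, a₉] : QState 16)) := by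
  simp only [map_sum]
  have hket : ∀ b0 b3 : Bool,
      Rem (15 : Fin 16) 11 a₉ (ket ![b0, a₁, b3, a₂, b0, b3, a₃, b0, a₄, b3, a₅, (xor b3 b0), a₆, a₈, a₇, (xor b3 b0)])
      = (Real.sqrt 2 : ℂ)⁻¹ • (ket ![b0, a₁, b3, a₂, b0, b3, a₃, b0, a₄, b3, a₅, (xor b3 b0), a₆, a₈, a₇, a₉] : QState 16) := by
    intro b0 b3
    rw [Rem_ket 15 11 (by decide) a₉ (![b0, a₁, b3, a₂, b0, b3, a₃, b0, a₄, b3, a₅, (xor b3 b0), a₆, a₈, a₇, (xor b3 b0)]) (rfl)]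
    have hv : Function.update (![b0, a₁, b3, a₂, b0, b3, a₃, b0, a₄, b3, a₅, (xor b3 b0), a₆, a₈, a₇, (xor b3 b0)] : Fin 16 → Bool) 15 a₉ = ![b0, a₁, b3, a₂, b0, b3, a₃, b0, a₄, b3, a₅, (xor b3 b0), a₆, a₈, a₇, a₉] := by
      funext i; fin_cases i <;> rfl
    rw [hv]
  simp only [hket, ← Finset.smul_sum]

lemma step12 (a₁ a₂ a₃ a₄ a₅ a₆ a₇ a₈ a₉ a₁₀ : Bool) :
    RemAdd (11 : Fin 16) 4 9 a₁₀ (∑ b0 : Bool, ∑ b3 : Bool,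
      (ket ![b0, a₁, b3, a₂, b0, b3, a₃, b0, a₄, b3, a₅, (xor b3 b0), a₆, a₈, a₇, a₉] : QState 16))
    = (Real.sqrt 2 : ℂ)⁻¹ • (∑ b0 : Bool, ∑ b3 : Bool,
      (ket ![b0, a₁, b3, a₂, b0, b3, a₃, b0, a₄, b3, a₅, a₁₀, a₆, a₈, a₇, a₉] : QState 16)) := by
  simp only [map_sum]
  have hket : ∀ b0 b3 : Bool,
      RemAdd (11 : Fin 16) 4 9 a₁₀ (ket ![b0, a₁, b3, a₂, b0, b3, a₃, b0, a₄, b3, a₅, (xor b3 b0), a₆, a₈, a₇, a₉])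
      = (Real.sqrt 2 : ℂ)⁻¹ • (ket ![b0, a₁, b3, a₂, b0, b3, a₃, b0, a₄, b3, a₅, a₁₀, a₆, a₈, a₇, a₉] : QState 16) := by
    intro b0 b3
    rw [RemAdd_ket 11 4 9 (by decide) (by decide) a₁₀ (![b0, a₁, b3, a₂, b0, b3, a₃, b0, a₄, b3, a₅, (xor b3 b0), a₆, a₈, a₇, a₉]) (by cases b0 <;> cases b3 <;> rfl)]
    have hv : Function.update (![b0, a₁, b3, a₂, b0, b3, a₃, b0, a₄, b3, a₅, (xor b3 b0), a₆, a₈, a₇, a₉] : Fin 16 → Bool) 11 a₁₀ = ![b0, a₁, b3, a₂, b0, b3, a₃, b0, a₄, b3, a₅, a₁₀, a₆, a₈, a₇, a₉] := by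
      funext i; fin_cases i <;> rfl
    rw [hv]
  simp only [hket, ← Finset.smul_sum]

lemma step13 (a₁ a₂ a₃ a₄ a₅ a₆ a₇ a₈ a₉ a₁₀ a₁₁ : Bool) :
    Rem (4 : Fin 16) 0 a₁₁ (∑ b0 : Bool, ∑ b3 : Bool,
      (ket ![b0, a₁, b3, a₂, b0, b3, a₃, b0, a₄, b3, a₅, a₁₀, a₆, a₈, a₇, a₉] : QState 16))
    = (Real.sqrt 2 : ℂ)⁻¹ • (∑ b0 : Bool, ∑ b3 : Bool,
      (ket ![b0, a₁, b3, a₂, a₁₁, b3, a₃, b0, a₄, b3, a₅, a₁₀, a₆, a₈, a₇, a₉] : QState 16)) := by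
  simp only [map_sum]
  have hket : ∀ b0 b3 : Bool,
      Rem (4 : Fin 16) 0 a₁₁ (ket ![b0, a₁, b3, a₂, b0, b3, a₃, b0, a₄, b3, a₅, a₁₀, a₆, a₈, a₇, a₉])
      = (Real.sqrt 2 : ℂ)⁻¹ • (ket ![b0, a₁, b3, a₂, a₁₁, b3, a₃, b0, a₄, b3, a₅, a₁₀, a₆, a₈, a₇, a₉] : QState 16) := by
    intro b0 b3
    rw [Rem_ket 4 0 (by decide) a₁₁ (![b0, a₁, b3, a₂, b0, b3, a₃, b0, a₄, b3, a₅, a₁₀, a₆, a₈, a₇, a₉]) (rfl)]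
    have hv : Function.update (![b0, a₁, b3, a₂, b0, b3, a₃, b0, a₄, b3, a₅, a₁₀, a₆, a₈, a₇, a₉] : Fin 16 → Bool) 4 a₁₁ = ![b0, a₁, b3, a₂, a₁₁, b3, a₃, b0, a₄, b3, a₅, a₁₀, a₆, a₈, a₇, a₉] := by
      funext i; fin_cases i <;> rfl
    rw [hv]
  simp only [hket, ← Finset.smul_sum]

lemma step14 (a₁ a₂ a₃ a₄ a₅ a₆ a₇ a₈ a₉ a₁₀ a₁₁ a₁₂ : Bool) :
    Rem (9 : Fin 16) 5 a₁₂ (∑ b0 : Bool, ∑ b3 : Bool,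
      (ket ![b0, a₁, b3, a₂, a₁₁, b3, a₃, b0, a₄, b3, a₅, a₁₀, a₆, a₈, a₇, a₉] : QState 16))
    = (Real.sqrt 2 : ℂ)⁻¹ • (∑ b0 : Bool, ∑ b3 : Bool,
      (ket ![b0, a₁, b3, a₂, a₁₁, b3, a₃, b0, a₄, a₁₂, a₅, a₁₀, a₆, a₈, a₇, a₉] : QState 16)) := by
  simp only [map_sum]
  have hket : ∀ b0 b3 : Bool,
      Rem (9 : Fin 16) 5 a₁₂ (ket ![b0, a₁, b3, a₂, a₁₁, b3, a₃, b0, a₄, b3, a₅, a₁₀, a₆, a₈, a₇, a₉])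
      = (Real.sqrt 2 : ℂ)⁻¹ • (ket ![b0, a₁, b3, a₂, a₁₁, b3, a₃, b0, a₄, a₁₂, a₅, a₁₀, a₆, a₈, a₇, a₉] : QState 16) := by
    intro b0 b3
    rw [Rem_ket 9 5 (by decide) a₁₂ (![b0, a₁, b3, a₂, a₁₁, b3, a₃, b0, a₄, b3, a₅, a₁₀, a₆, a₈, a₇, a₉]) (rfl)]
    have hv : Function.update (![b0, a₁, b3, a₂, a₁₁, b3, a₃, b0, a₄, b3, a₅, a₁₀, a₆, a₈, a₇, a₉] : Fin 16 → Bool) 9 a₁₂ = ![b0, a₁, b3, a₂, a₁₁, b3, a₃, b0, a₄, a₁₂, a₅, a₁₀, a₆, a₈, a₇, a₉] := by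
      funext i; fin_cases i <;> rfl
    rw [hv]
  simp only [hket, ← Finset.smul_sum]


/-- **Quantum network coding on the butterfly with additional registers.**
The sixteen registers `A', A, B, C, D, E', E, F, G, H, I, J, K, L, M, N` are `0,…,15`;
the initial state is
`|Ψ₀⟩ = |+⟩_{A'} ⊗ |Ψ⁺⟩_{AB} ⊗ |Ψ⁺⟩_{CD} ⊗ |+⟩_{E'} ⊗ |Ψ⁺⟩_{EF} ⊗ |Ψ⁺⟩_{GH}
      ⊗ |Ψ⁺⟩_{IJ} ⊗ |Ψ⁺⟩_{KL} ⊗ |Ψ⁺⟩_{MN}`.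
Performing in order `Fanout^{A'}_{A→B, C→D}`, `Fanout^{E'}_{E→F, G→H}`,
`Add^{D,H}_{I→J}`, `Fanout^J_{K→L, M→N}`, `CNOT^{(N,F)}`, `CNOT^{(L,B)}`, `Rem_{L→J}`,
`Rem_{N→J}`, `RemAdd_{J→D,H}`, `Rem_{D→A'}`, `Rem_{H→E'}`, for every string of the
twelve measurement outcomes, yields `2⁻⁶ • |Ψ⁺⟩_{A'F} ⊗ |Ψ⁺⟩_{BE'}` tensored with
computational-basis states of the measured registers (to be disregarded): regardless of
the outcomes the protocol produces EPR pairs between `A'`-`F` and between `B`-`E'`. -/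

theorem butterfly_network_coding_with_additional_registers
    (a₁ a₂ a₃ a₄ a₅ a₆ a₇ a₈ a₉ a₁₀ a₁₁ a₁₂ : Bool) :
    Rem (9 : Fin 16) 5 a₁₂ (Rem (4 : Fin 16) 0 a₁₁ (RemAdd (11 : Fin 16) 4 9 a₁₀
      (Rem (15 : Fin 16) 11 a₉ (Rem (13 : Fin 16) 11 a₈ (CNOTgate (13 : Fin 16) 2
        (CNOTgate (15 : Fin 16) 7 (Fanout (11 : Fin 16) 12 13 14 15 a₆ a₇
          (AddOp (4 : Fin 16) 9 10 11 a₅ (Fanout (5 : Fin 16) 6 7 8 9 a₃ a₄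
            (Fanout (0 : Fin 16) 1 2 3 4 a₁ a₂
              (((Real.sqrt 2 : ℂ)⁻¹) ^ 9 •
                ∑ b : Fin 9 → Bool,
                  ket (fun i : Fin 16 =>
                    b (![0, 1, 1, 2, 2, 3, 4, 4, 5, 5, 6, 6, 7, 7, 8, 8] i)))))))))))))
    = ((2 : ℂ) ^ 6)⁻¹ • ((2 : ℂ)⁻¹ •
        ∑ s : Bool, ∑ t : Bool,
          ket ![s, a₁, t, a₂, a₁₁, t, a₃, s, a₄, a₁₂, a₅, a₁₀, a₆, a₈, a₇, a₉]) := by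
  rw [init]
  simp only [Fanout, AddOp, LinearMap.comp_apply, map_smul]
  rw [step1 a₁, step2 a₁ a₂, step3 a₁ a₂ a₃, step4 a₁ a₂ a₃ a₄, step5a a₁ a₂ a₃ a₄,
    step5b a₁ a₂ a₃ a₄ a₅, step6 a₁ a₂ a₃ a₄ a₅ a₆, step7 a₁ a₂ a₃ a₄ a₅ a₆ a₇,
    step8 a₁ a₂ a₃ a₄ a₅ a₆ a₇, step9 a₁ a₂ a₃ a₄ a₅ a₆ a₇,
    step10 a₁ a₂ a₃ a₄ a₅ a₆ a₇ a₈]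
  simp only [map_smul]
  rw [step11 a₁ a₂ a₃ a₄ a₅ a₆ a₇ a₈ a₉]
  simp only [map_smul]
  rw [step12 a₁ a₂ a₃ a₄ a₅ a₆ a₇ a₈ a₉ a₁₀]
  simp only [map_smul]
  rw [step13 a₁ a₂ a₃ a₄ a₅ a₆ a₇ a₈ a₉ a₁₀ a₁₁]
  simp only [map_smul]
  rw [step14 a₁ a₂ a₃ a₄ a₅ a₆ a₇ a₈ a₉ a₁₀ a₁₁ a₁₂]
  simp only [smul_smul]
  congr 1
  have h2 : (Real.sqrt 2 : ℂ) ^ 2 = 2 := by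
    norm_cast
    exact Real.sq_sqrt (by norm_num)
  have h14 : ((Real.sqrt 2 : ℂ)⁻¹) ^ 14 = ((2:ℂ)^6)⁻¹ * (2:ℂ)⁻¹ := by
    rw [inv_pow, show (14:ℕ) = 2*7 from rfl, pow_mul, h2]
    norm_num
  rw [← h14]
  ring

end

end QNC
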